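/- Let κ ∈ ℝ with κ ≠ 0, let ρ(y) = (3/2) sech²(y/2), and define the linear operator L acting on pairs of smooth functions (u,w) on ℝ by L(u,w) = ( u'' − (1−κ)u + 2ρu − κw , κ(u − w) ). Then L(ρ', ρ') = (0, 0) (the goldstone mode), and L(0, −ρ'/κ) = (ρ', ρ') (the propagator mode), so the zero eigenvalue of L has a generalized eigenfunction and algebraic multiplicity at least two. -/

import Mathlib

/-!
Writing `ρ = (3/2)(1 − tanh²(y/2))` gives `ρ' = −ρ tanh(y/2)` and then the profile equation
`ρ'' = ρ − ρ²`. Differentiating it once more, `ρ''' = ρ' − 2ρρ'`, which is exactly the vanishing of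
the first component of `L(ρ', ρ')`; the propagator identity is pure algebra once `κ ≠ 0`.
-/

open Real

/-- The spike profile `ρ(y) = (3/2) sech²(y/2)`. -/
noncomputable def rho (y : ℝ) : ℝ := (3/2) * (1 / Real.cosh (y/2))^2

/-- The linearized operator `L(u,w) = (u'' − (1−κ)u + 2ρu − κw, κ(u − w))`. -/
noncomputable def Lop (κ : ℝ) (u w : ℝ → ℝ) : (ℝ → ℝ) × (ℝ → ℝ) :=
  (fun y => deriv (deriv u) y - (1 - κ) * u y + 2 * rho y * u y - κ * w y,
   fun y => κ * (u y - w y))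

theorem Real.hasDerivAt_tanh (x : ℝ) : HasDerivAt tanh (1 - tanh x ^ 2) x := by
  have hcosh : cosh x ≠ 0 := (cosh_pos x).ne'
  have hquot := (hasDerivAt_sinh x).div (hasDerivAt_cosh x) hcosh
  rw [show (sinh / cosh : ℝ → ℝ) = tanh from funext fun y => (tanh_eq_sinh_div_cosh y).symm]
    at hquot
  refine hquot.congr_deriv ?_
  rw [tanh_eq_sinh_div_cosh]
  field_simp

lemma rho_eq_tanh (y : ℝ) : rho y = 3/2 * (1 - tanh (y/2) ^ 2) := by
  have hcosh : cosh (y/2) ≠ 0 := (cosh_pos _).ne'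
  rw [rho, tanh_eq_sinh_div_cosh]
  field_simp
  linear_combination -cosh_sq_sub_sinh_sq (y/2)

lemma hasDerivAt_tanh_half (y : ℝ) :
    HasDerivAt (fun y => tanh (y/2)) ((1 - tanh (y/2) ^ 2) / 2) y := by
  refine ((hasDerivAt_tanh (y/2)).comp y ((hasDerivAt_id y).div_const 2)).congr_deriv ?_
  simp [div_eq_mul_inv]

lemma hasDerivAt_rho (y : ℝ) : HasDerivAt rho (-(rho y * tanh (y/2))) y := by
  have h : HasDerivAt (fun y => 3/2 * (1 - tanh (y/2) ^ 2)) (-(rho y * tanh (y/2))) y := by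
    refine ((((hasDerivAt_tanh_half y).pow 2).const_sub 1).const_mul (3/2 : ℝ)).congr_deriv ?_
    rw [rho_eq_tanh]
    ring
  simpa only [← rho_eq_tanh] using h

lemma deriv_rho : deriv rho = fun y => -(rho y * tanh (y/2)) :=
  funext fun y => (hasDerivAt_rho y).deriv

lemma deriv_deriv_rho : deriv (deriv rho) = fun y => rho y - rho y ^ 2 := by
  funext y
  rw [deriv_rho]
  refine (((hasDerivAt_rho y).mul (hasDerivAt_tanh_half y)).neg).deriv.trans ?_
  rw [rho_eq_tanh]
  ring

lemma deriv_deriv_deriv_rho :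
    deriv (deriv (deriv rho)) = fun y => deriv rho y - 2 * rho y * deriv rho y := by
  funext y
  rw [deriv_deriv_rho]
  have hρ : HasDerivAt rho (deriv rho y) y := (hasDerivAt_rho y).differentiableAt.hasDerivAt
  refine (hρ.sub (hρ.pow 2)).deriv.trans ?_
  ring

lemma Lop_deriv_rho (κ : ℝ) : Lop κ (deriv rho) (deriv rho) = (0, 0) := by
  ext y
  · simp only [Lop, deriv_deriv_deriv_rho, Pi.zero_apply]
    ring
  · simp [Lop]

lemma Lop_propagator {κ : ℝ} (hκ : κ ≠ 0) :
    Lop κ (fun _ => 0) (fun t => -(deriv rho t) / κ) = (deriv rho, deriv rho) := by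
  ext y
  · simp only [Lop, deriv_const']
    field_simp
    ring
  · simp only [Lop]
    field_simp
    ring

theorem stmt_12 (κ : ℝ) (hκ : κ ≠ 0) :
    (∀ y : ℝ, (Lop κ (deriv rho) (deriv rho)).1 y = 0) ∧
    (∀ y : ℝ, (Lop κ (deriv rho) (deriv rho)).2 y = 0) ∧
    (∀ y : ℝ, (Lop κ (fun _ => 0) (fun t => -(deriv rho t) / κ)).1 y = deriv rho y) ∧
    (∀ y : ℝ, (Lop κ (fun _ => 0) (fun t => -(deriv rho t) / κ)).2 y = deriv rho y) := by
  simp [Lop_deriv_rho, Lop_propagator hκ]
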